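/- arXiv:1411.7955 — 2 statements merged into one kernel-verified Lean document; each statement's English description precedes it below -/
import Mathlib

section
/- For α ∈ (0,2) and independent random variables X and Y with E|X|^α + E|Y|^α < ∞, ℰ(X,Y;α) = ∫ |φ_X(t) − φ_Y(t)|² ω(t;α) dt where ω(t;α) = (C(α)|t|^{1+α})^{−1} and C(α) = 2π^{1/2} Γ(1−α/2)/(α 2^α Γ((1+α)/2)); that is, the generalized energy distance equals the weighted L² distance between characteristic functions. -/
/-!
Write `ω(t) = (C(α) |t| ^ (1 + α))⁻¹`. Everything rests on the identity
`∫ (1 - cos (t x)) ω(t) dt = |x| ^ α`, which follows from the Gamma subordination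
`|t| ^ (-(1 + α)) = Γ((1 + α) / 2)⁻¹ ∫₀^∞ u ^ ((α - 1) / 2) e ^ (-u t²) du`, Tonelli, the Fourier
transform of the Gaussian, and `∫₀^∞ u ^ (s - 1) (1 - e ^ (-c / u)) du = c ^ s Γ(1 - s) / s`.
Averaging it over the law of `X - Y` (Tonelli again) gives
`E|X - Y| ^ α = ∫ (1 - Re φ_{X-Y}(t)) ω(t) dt`, and independence gives `φ_{X-Y} = φ_X conj φ_Y`.
Since `X'`, `Y'` have the characteristic functions of `X`, `Y`, the energy distance becomes
`∫ (2 (1 - Re (φ_X conj φ_Y)) - (1 - |φ_X|²) - (1 - |φ_Y|²)) ω = ∫ |φ_X - φ_Y|² ω`.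
-/

open MeasureTheory ProbabilityTheory Real
open scoped ENNReal

noncomputable section

open Set ComplexConjugate

def energyDistanceConst (α : ℝ) : ℝ :=
  2 * √π * Gamma (1 - α / 2) / (α * 2 ^ α * Gamma ((1 + α) / 2))

def energyWeight (α t : ℝ) : ℝ := (energyDistanceConst α * |t| ^ (1 + α))⁻¹

lemma energyDistanceConst_pos {α : ℝ} (hα : α ∈ Ioo 0 2) : 0 < energyDistanceConst α := by
  have := Gamma_pos_of_pos (show 0 < 1 - α / 2 by linarith [hα.2])
  have := Gamma_pos_of_pos (show 0 < (1 + α) / 2 by linarith [hα.1])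
  have := hα.1
  unfold energyDistanceConst
  positivity

lemma energyWeight_nonneg {α : ℝ} (hα : α ∈ Ioo 0 2) (t : ℝ) : 0 ≤ energyWeight α t := by
  have := energyDistanceConst_pos hα
  unfold energyWeight
  positivity

lemma measurable_energyWeight (α : ℝ) : Measurable (energyWeight α) := by
  unfold energyWeight
  fun_prop

lemma lintegral_Ioi_rpow_mul_exp_neg_mul {q b : ℝ} (hq : -1 < q) (hb : 0 < b) :
    ∫⁻ x in Ioi 0, ENNReal.ofReal (x ^ q * exp (-(b * x)))
      = ENNReal.ofReal (b ^ (-(q + 1)) * Gamma (q + 1)) := by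
  have hint : IntegrableOn (fun x : ℝ => x ^ q * exp (-(b * x))) (Ioi 0) := by
    simpa [rpow_one] using integrableOn_rpow_mul_exp_neg_mul_rpow hq one_pos hb
  rw [← ofReal_integral_eq_lintegral_ofReal hint
    ((ae_restrict_mem measurableSet_Ioi).mono fun x (hx : 0 < x) => by positivity)]
  have h := integral_rpow_mul_exp_neg_mul_Ioi (a := q + 1) (by linarith) hb
  rw [add_sub_cancel_right, one_div, inv_rpow hb.le, ← rpow_neg hb.le] at h
  rw [h]

lemma lintegral_Ioo_rpow_sub_one {s a : ℝ} (hs : 0 < s) (ha : 0 < a) :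
    ∫⁻ u in Ioo 0 a, ENNReal.ofReal (u ^ (s - 1)) = ENNReal.ofReal (a ^ s / s) := by
  have hint : IntegrableOn (fun u : ℝ => u ^ (s - 1)) (Ioc 0 a) :=
    (intervalIntegrable_iff_integrableOn_Ioc_of_le ha.le).mp
      (intervalIntegral.intervalIntegrable_rpow' (by linarith))
  rw [restrict_Ioo_eq_restrict_Ioc, ← ofReal_integral_eq_lintegral_ofReal hint
    ((ae_restrict_mem measurableSet_Ioc).mono fun u (hu : u ∈ Ioc 0 a) => by
      have := hu.1; positivity),
    ← intervalIntegral.integral_of_le ha.le, integral_rpow (Or.inl (by linarith)),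
    sub_add_cancel, zero_rpow hs.ne', sub_zero]

lemma lintegral_Ioo_exp_neg {b : ℝ} (hb : 0 < b) :
    ∫⁻ w in Ioo 0 b, ENNReal.ofReal (exp (-w)) = ENNReal.ofReal (1 - exp (-b)) := by
  have hint : IntegrableOn (fun w : ℝ => exp (-w)) (Ioc 0 b) :=
    (intervalIntegrable_iff_integrableOn_Ioc_of_le hb.le).mp
      ((continuous_exp.comp continuous_neg).intervalIntegrable _ _)
  rw [restrict_Ioo_eq_restrict_Ioc, ← ofReal_integral_eq_lintegral_ofReal hint
    (ae_of_all _ fun w => (exp_pos _).le), ← intervalIntegral.integral_of_le hb.le,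
    intervalIntegral.integral_comp_neg (fun w => exp w), integral_exp, neg_zero, exp_zero]

lemma setLIntegral_Ioi_ite_mul_lt {a : ℝ} (ha : 0 < a) (c : ℝ) (f : ℝ → ℝ≥0∞) :
    ∫⁻ w in Ioi 0, (if a * w < c then f w else 0) = ∫⁻ w in Ioo 0 (c / a), f w := by
  have h : ∀ w, (if a * w < c then f w else 0) = (Iio (c / a)).indicator f w := fun w => by
    simp [indicator, lt_div_iff₀' ha]
  simp_rw [h]
  rw [lintegral_indicator measurableSet_Iio, Measure.restrict_restrict measurableSet_Iio,
    Iio_inter_Ioi]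

lemma lintegral_Ioi_rpow_mul_one_sub_exp_neg_div {s c : ℝ} (hs0 : 0 < s) (hs1 : s < 1)
    (hc : 0 < c) :
    ∫⁻ u in Ioi 0, ENNReal.ofReal (u ^ (s - 1) * (1 - exp (-(c / u))))
      = ENNReal.ofReal (c ^ s * Gamma (1 - s) / s) := by
  -- Write `1 - exp (-(c / u))` as `∫_{0 < w < c / u} exp (-w) dw` and swap the integrals.
  let g : ℝ → ℝ → ℝ≥0∞ := fun u w =>
    if u * w < c then ENNReal.ofReal (u ^ (s - 1)) * ENNReal.ofReal (exp (-w)) else 0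
  have hg : Measurable (Function.uncurry g) :=
    Measurable.ite (measurableSet_lt (by fun_prop) measurable_const) (by fun_prop)
      measurable_const
  have inner_w : ∀ u ∈ Ioi (0 : ℝ), ∫⁻ w in Ioi 0, g u w
      = ENNReal.ofReal (u ^ (s - 1) * (1 - exp (-(c / u)))) := fun u (hu : 0 < u) => by
    rw [setLIntegral_Ioi_ite_mul_lt hu, lintegral_const_mul' _ _ ENNReal.ofReal_ne_top,
      lintegral_Ioo_exp_neg (div_pos hc hu), ← ENNReal.ofReal_mul (by positivity)]
  have inner_u : ∀ w ∈ Ioi (0 : ℝ), ∫⁻ u in Ioi 0, g u w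
      = ENNReal.ofReal (c ^ s / s) * ENNReal.ofReal (w ^ (-s) * exp (-(1 * w))) :=
    fun w (hw : 0 < w) => by
    rw [one_mul]
    simp_rw [g, mul_comm _ w]
    rw [setLIntegral_Ioi_ite_mul_lt hw, lintegral_mul_const' _ _ ENNReal.ofReal_ne_top,
      lintegral_Ioo_rpow_sub_one hs0 (div_pos hc hw), ← ENNReal.ofReal_mul (by positivity),
      ← ENNReal.ofReal_mul (by positivity), div_rpow hc.le hw.le, rpow_neg hw.le]
    ring_nf
  calc ∫⁻ u in Ioi 0, ENNReal.ofReal (u ^ (s - 1) * (1 - exp (-(c / u))))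
      = ∫⁻ u in Ioi 0, ∫⁻ w in Ioi 0, g u w :=
        (setLIntegral_congr_fun measurableSet_Ioi inner_w).symm
    _ = ∫⁻ w in Ioi 0, ∫⁻ u in Ioi 0, g u w := lintegral_lintegral_swap hg.aemeasurable
    _ = ∫⁻ w in Ioi 0, ENNReal.ofReal (c ^ s / s) * ENNReal.ofReal (w ^ (-s) * exp (-(1 * w))) :=
        setLIntegral_congr_fun measurableSet_Ioi inner_u
    _ = ENNReal.ofReal (c ^ s * Gamma (1 - s) / s) := by
        rw [lintegral_const_mul' _ _ ENNReal.ofReal_ne_top,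
          lintegral_Ioi_rpow_mul_exp_neg_mul (by linarith) one_pos, one_rpow, one_mul,
          ← ENNReal.ofReal_mul (by positivity), neg_add_eq_sub]
        ring_nf

lemma integral_cos_mul_mul_exp_neg_mul_sq {u : ℝ} (hu : 0 < u) (x : ℝ) :
    ∫ t : ℝ, cos (x * t) * exp (-(u * t ^ 2)) = √(π / u) * exp (-(x ^ 2 / (4 * u))) := by
  have hu' : 0 < (u : ℂ).re := by simpa using hu
  have hint :
      Integrable fun t : ℝ => Complex.exp (Complex.I * x * t) * Complex.exp (-u * t ^ 2) := by
    simpa [← Complex.exp_add, add_comm, mul_comm] using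
      integrable_cexp_quadratic hu' (Complex.I * x) 0
  have hre : ∀ t : ℝ, (Complex.exp (Complex.I * x * t) * Complex.exp (-u * t ^ 2)).re
      = cos (x * t) * exp (-(u * t ^ 2)) := fun t => by
    have hz : Complex.I * x * t + -u * t ^ 2
        = ((-(u * t ^ 2) : ℝ) : ℂ) + ((x * t : ℝ) : ℂ) * Complex.I := by
      push_cast
      ring
    rw [← Complex.exp_add, hz, Complex.exp_add, ← Complex.ofReal_exp, Complex.re_ofReal_mul,
      Complex.exp_ofReal_mul_I_re, mul_comm]
  have hval : (π / u : ℂ) ^ (1 / 2 : ℂ) * Complex.exp (-x ^ 2 / (4 * u))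
      = ((√(π / u) * exp (-(x ^ 2 / (4 * u))) : ℝ) : ℂ) := by
    rw [sqrt_eq_rpow, Complex.ofReal_mul, Complex.ofReal_cpow (by positivity), Complex.ofReal_exp]
    push_cast
    ring_nf
  simp_rw [← hre, ← RCLike.re_to_complex]
  rw [integral_re hint, fourierIntegral_gaussian hu', hval, RCLike.re_to_complex, Complex.ofReal_re]

lemma lintegral_one_sub_cos_mul_exp_neg_mul_sq {u : ℝ} (hu : 0 < u) (x : ℝ) :
    ∫⁻ t : ℝ, ENNReal.ofReal ((1 - cos (x * t)) * exp (-(u * t ^ 2)))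
      = ENNReal.ofReal (√(π / u) * (1 - exp (-(x ^ 2 / (4 * u))))) := by
  have hg : Integrable fun t : ℝ => exp (-(u * t ^ 2)) := by
    simpa [neg_mul] using integrable_exp_neg_mul_sq hu
  have hcos : Integrable fun t : ℝ => cos (x * t) * exp (-(u * t ^ 2)) :=
    hg.bdd_mul (c := 1) (by fun_prop) (ae_of_all _ fun t => by simpa using abs_cos_le_one _)
  have hint : Integrable fun t : ℝ => (1 - cos (x * t)) * exp (-(u * t ^ 2)) :=
    (hg.sub hcos).congr (ae_of_all _ fun t => by simp only [Pi.sub_apply]; ring)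
  rw [← ofReal_integral_eq_lintegral_ofReal hint
    (ae_of_all _ fun t => mul_nonneg (sub_nonneg.2 (cos_le_one _)) (exp_pos _).le)]
  simp_rw [sub_mul, one_mul]
  have hgauss : ∫ t : ℝ, exp (-(u * t ^ 2)) = √(π / u) := by
    simpa [neg_mul] using integral_gaussian u
  rw [integral_sub hg hcos, integral_cos_mul_mul_exp_neg_mul_sq hu, hgauss, mul_sub, mul_one]

lemma ofReal_energyWeight_eq_lintegral {α t : ℝ} (hα : α ∈ Ioo 0 2) (ht : t ≠ 0) :
    ENNReal.ofReal (energyWeight α t)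
      = ENNReal.ofReal (energyDistanceConst α * Gamma ((1 + α) / 2))⁻¹
        * ∫⁻ u in Ioi 0, ENNReal.ofReal (u ^ ((α - 1) / 2) * exp (-(u * t ^ 2))) := by
  have hC := energyDistanceConst_pos hα
  have hA := Gamma_pos_of_pos (show 0 < (1 + α) / 2 by linarith [hα.1])
  have ht2 : (t ^ 2) ^ (-((α - 1) / 2 + 1)) = (|t| ^ (1 + α))⁻¹ := by
    rw [← sq_abs, ← rpow_natCast, ← rpow_mul (abs_nonneg t), ← rpow_neg (abs_nonneg t)]
    congr 1
    push_cast
    ring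
  simp_rw [fun u : ℝ => mul_comm u (t ^ 2)]
  rw [lintegral_Ioi_rpow_mul_exp_neg_mul (by linarith [hα.1]) (by positivity), ht2,
    ← ENNReal.ofReal_mul (by positivity), energyWeight]
  congr 1
  rw [show (α - 1) / 2 + 1 = (1 + α) / 2 by ring]
  field_simp

lemma lintegral_one_sub_cos_mul_energyWeight_eq_lintegral_Ioi {α : ℝ} (hα : α ∈ Ioo 0 2)
    (x : ℝ) :
    ∫⁻ t, ENNReal.ofReal ((1 - cos (t * x)) * energyWeight α t)
      = ENNReal.ofReal (energyDistanceConst α * Gamma ((1 + α) / 2))⁻¹ * ENNReal.ofReal √π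
        * ∫⁻ u in Ioi 0, ENNReal.ofReal (u ^ (α / 2 - 1) * (1 - exp (-(x ^ 2 / 4 / u)))) := by
  set K := ENNReal.ofReal (energyDistanceConst α * Gamma ((1 + α) / 2))⁻¹
  have one_sub_cos_nonneg : ∀ y, 0 ≤ 1 - cos y := fun y => sub_nonneg.2 (cos_le_one y)
  let F : ℝ → ℝ → ℝ≥0∞ := fun t u => ENNReal.ofReal (1 - cos (x * t))
    * ENNReal.ofReal (u ^ ((α - 1) / 2)) * ENNReal.ofReal (exp (-(u * t ^ 2)))
  have hF : Measurable (Function.uncurry F) := by fun_prop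
  have subordinate : ∀ᵐ t : ℝ, ENNReal.ofReal ((1 - cos (t * x)) * energyWeight α t)
      = K * ∫⁻ u in Ioi 0, F t u := by
    filter_upwards [compl_mem_ae_iff.2 (measure_singleton (0 : ℝ))] with t (ht : t ≠ 0)
    simp_rw [F, mul_assoc, ← ENNReal.ofReal_mul' (exp_pos _).le]
    rw [ENNReal.ofReal_mul (one_sub_cos_nonneg _), ofReal_energyWeight_eq_lintegral hα ht,
      lintegral_const_mul' _ _ ENNReal.ofReal_ne_top, mul_left_comm, mul_comm t x]
  have gaussian : ∀ u ∈ Ioi (0 : ℝ), ∫⁻ t, F t u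
      = ENNReal.ofReal √π * ENNReal.ofReal (u ^ (α / 2 - 1) * (1 - exp (-(x ^ 2 / 4 / u)))) :=
    fun u (hu : 0 < u) => by
    simp_rw [F, mul_right_comm _ (ENNReal.ofReal (u ^ ((α - 1) / 2))),
      ← ENNReal.ofReal_mul (one_sub_cos_nonneg _)]
    rw [lintegral_mul_const' _ _ ENNReal.ofReal_ne_top,
      lintegral_one_sub_cos_mul_exp_neg_mul_sq hu, ← ENNReal.ofReal_mul' (rpow_nonneg hu.le _),
      ← ENNReal.ofReal_mul (sqrt_nonneg _)]
    congr 1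
    have hq : u ^ ((α - 1) / 2) = √u * u ^ (α / 2 - 1) := by
      rw [sqrt_eq_rpow, ← rpow_add hu]
      congr 1
      ring
    rw [hq, sqrt_div' _ hu.le, div_div, mul_comm 4 u]
    field_simp
  calc ∫⁻ t, ENNReal.ofReal ((1 - cos (t * x)) * energyWeight α t)
      = ∫⁻ t, K * ∫⁻ u in Ioi 0, F t u := lintegral_congr_ae subordinate
    _ = K * ∫⁻ u in Ioi 0, ∫⁻ t, F t u := by
        rw [lintegral_const_mul' _ _ ENNReal.ofReal_ne_top,
          lintegral_lintegral_swap hF.aemeasurable]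
    _ = _ := by
        rw [setLIntegral_congr_fun measurableSet_Ioi gaussian,
          lintegral_const_mul' _ _ ENNReal.ofReal_ne_top, mul_assoc]

theorem lintegral_one_sub_cos_mul_energyWeight {α : ℝ} (hα : α ∈ Ioo 0 2) (x : ℝ) :
    ∫⁻ t, ENNReal.ofReal ((1 - cos (t * x)) * energyWeight α t) = ENNReal.ofReal (|x| ^ α) := by
  obtain rfl | hx := eq_or_ne x 0
  · simp [zero_rpow hα.1.ne']
  have hpow : (x ^ 2 / 4) ^ (α / 2) = |x| ^ α / 2 ^ α := by
    rw [show x ^ 2 / 4 = (|x| / 2) ^ 2 by rw [div_pow, sq_abs]; norm_num, ← rpow_natCast,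
      ← rpow_mul (by positivity), div_rpow (abs_nonneg x) zero_le_two, Nat.cast_ofNat,
      mul_div_cancel₀ _ two_ne_zero]
  have hC := energyDistanceConst_pos hα
  have hA := Gamma_pos_of_pos (show 0 < (1 + α) / 2 by linarith [hα.1])
  have hG := Gamma_pos_of_pos (show 0 < 1 - α / 2 by linarith [hα.2])
  rw [lintegral_one_sub_cos_mul_energyWeight_eq_lintegral_Ioi hα,
    lintegral_Ioi_rpow_mul_one_sub_exp_neg_div (by linarith [hα.1]) (by linarith [hα.2])
      (by positivity),
    ← ENNReal.ofReal_mul (by positivity), ← ENNReal.ofReal_mul (by positivity), hpow]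
  congr 1
  unfold energyDistanceConst
  generalize Gamma (1 - α / 2) = G at hG ⊢
  have := hα.1.ne'
  field_simp

lemma re_charFun_eq_integral_cos (ν : Measure ℝ) [IsFiniteMeasure ν] (t : ℝ) :
    (charFun ν t).re = ∫ x, cos (t * x) ∂ν := by
  have hint : Integrable (fun x : ℝ => Complex.exp (t * x * Complex.I)) ν :=
    (integrable_const (1 : ℂ)).mono (by fun_prop)
      (ae_of_all _ fun x => by rw [← Complex.ofReal_mul, Complex.norm_exp_ofReal_mul_I]; simp)
  rw [charFun_apply_real, ← RCLike.re_to_complex, ← integral_re hint]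
  simp_rw [RCLike.re_to_complex, ← Complex.ofReal_mul, Complex.exp_ofReal_mul_I_re]

lemma one_sub_re_charFun_nonneg (ν : Measure ℝ) [IsProbabilityMeasure ν] (t : ℝ) :
    0 ≤ 1 - (charFun ν t).re :=
  sub_nonneg.2 ((Complex.re_le_norm _).trans (norm_charFun_le_one t))

lemma ofReal_one_sub_re_charFun_mul_eq_lintegral (ν : Measure ℝ) [IsProbabilityMeasure ν]
    {a : ℝ} (ha : 0 ≤ a) (t : ℝ) :
    ENNReal.ofReal ((1 - (charFun ν t).re) * a)
      = ∫⁻ x, ENNReal.ofReal ((1 - cos (t * x)) * a) ∂ν := by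
  have hcos : Integrable (fun x => cos (t * x)) ν :=
    (integrable_const (1 : ℝ)).mono (by fun_prop)
      (ae_of_all _ fun x => by simpa using abs_cos_le_one _)
  have hint : Integrable (fun x => (1 - cos (t * x)) * a) ν :=
    ((integrable_const 1).sub hcos).mul_const a
  rw [← ofReal_integral_eq_lintegral_ofReal hint
      (ae_of_all _ fun x => mul_nonneg (sub_nonneg.2 (cos_le_one _)) ha),
    integral_mul_const, integral_sub (integrable_const 1) hcos, re_charFun_eq_integral_cos,
    integral_const, probReal_univ, one_smul]

theorem integral_one_sub_re_charFun_mul_energyWeight (ν : Measure ℝ) [IsProbabilityMeasure ν]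
    {α : ℝ} (hα : α ∈ Ioo 0 2) (hν : Integrable (fun x => |x| ^ α) ν) :
    Integrable (fun t => (1 - (charFun ν t).re) * energyWeight α t) ∧
      ∫ t, (1 - (charFun ν t).re) * energyWeight α t = ∫ x, |x| ^ α ∂ν := by
  have hnonneg : 0 ≤ᵐ[volume] fun t => (1 - (charFun ν t).re) * energyWeight α t :=
    ae_of_all _ fun t => mul_nonneg (one_sub_re_charFun_nonneg ν t) (energyWeight_nonneg hα t)
  have hmeas : AEStronglyMeasurable (fun t => (1 - (charFun ν t).re) * energyWeight α t) :=
    ((measurable_const.sub (Complex.measurable_re.comp measurable_charFun)).mul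
      (measurable_energyWeight α)).aestronglyMeasurable
  have hlintegral : ∫⁻ t, ENNReal.ofReal ((1 - (charFun ν t).re) * energyWeight α t)
      = ENNReal.ofReal (∫ x, |x| ^ α ∂ν) := by
    have hF : Measurable (Function.uncurry fun t x : ℝ =>
        ENNReal.ofReal ((1 - cos (t * x)) * energyWeight α t)) := by
      have := measurable_energyWeight α
      fun_prop
    simp_rw [ofReal_one_sub_re_charFun_mul_eq_lintegral ν (energyWeight_nonneg hα _)]
    rw [lintegral_lintegral_swap hF.aemeasurable,
      lintegral_congr fun x => lintegral_one_sub_cos_mul_energyWeight hα x]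
    exact (ofReal_integral_eq_lintegral_ofReal hν (ae_of_all _ fun x => by positivity)).symm
  refine ⟨⟨hmeas, ?_⟩, ?_⟩
  · rw [hasFiniteIntegral_iff_ofReal hnonneg, hlintegral]
    exact ENNReal.ofReal_lt_top
  · rw [integral_eq_lintegral_of_nonneg_ae hnonneg hmeas, hlintegral,
      ENNReal.toReal_ofReal (integral_nonneg fun x => by positivity)]

section RandomVariables

variable {Ω : Type*} [MeasurableSpace Ω] {μ : Measure Ω}

lemma charFun_map_eq_integral {X : Ω → ℝ} (hX : AEMeasurable X μ) (t : ℝ) :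
    charFun (μ.map X) t = ∫ ω, Complex.exp (Complex.I * (t * X ω)) ∂μ := by
  rw [charFun_apply_real, integral_map hX (by fun_prop)]
  simp_rw [mul_comm Complex.I]

lemma ProbabilityTheory.IndepFun.charFun_map_sub_eq_mul_conj [IsFiniteMeasure μ] {X Y : Ω → ℝ}
    (hX : AEMeasurable X μ) (hY : AEMeasurable Y μ) (hXY : IndepFun X Y μ) (t : ℝ) :
    charFun (μ.map fun ω => X ω - Y ω) t
      = charFun (μ.map X) t * conj (charFun (μ.map Y) t) := by
  have hXY' : IndepFun X (fun ω => -1 * Y ω) μ := hXY.comp measurable_id (measurable_const_mul _)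
  have hsub : (fun ω => X ω - Y ω) = fun ω => X ω + -1 * Y ω := by ext; ring
  rw [hsub, hXY'.charFun_map_fun_add_eq_mul hX (hY.const_mul _), Pi.mul_apply,
    charFun_map_mul_comp hY, neg_one_mul, charFun_neg]

lemma integrable_abs_sub_rpow {α : ℝ} (hα : 0 < α) {X Y : Ω → ℝ}
    (hX : AEStronglyMeasurable X μ) (hY : AEStronglyMeasurable Y μ)
    (hXm : Integrable (fun ω => |X ω| ^ α) μ) (hYm : Integrable (fun ω => |Y ω| ^ α) μ) :
    Integrable (fun ω => |X ω - Y ω| ^ α) μ := by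
  have hp : ENNReal.ofReal α ≠ 0 := ENNReal.ofReal_ne_zero_iff.2 hα
  have key : ∀ {Z : Ω → ℝ}, AEStronglyMeasurable Z μ →
      (Integrable (fun ω => |Z ω| ^ α) μ ↔ MemLp Z (ENNReal.ofReal α) μ) := fun hZ => by
    simpa [ENNReal.toReal_ofReal hα.le] using integrable_norm_rpow_iff hZ hp ENNReal.ofReal_ne_top
  exact (key (hX.sub hY)).2 (((key hX).1 hXm).sub ((key hY).1 hYm))

theorem ProbabilityTheory.IndepFun.integral_abs_sub_rpow_eq [IsProbabilityMeasure μ] {α : ℝ}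
    (hα : α ∈ Ioo 0 2) {X Y : Ω → ℝ} (hX : AEMeasurable X μ) (hY : AEMeasurable Y μ) (hXY : IndepFun X Y μ)
    (hXm : Integrable (fun ω => |X ω| ^ α) μ) (hYm : Integrable (fun ω => |Y ω| ^ α) μ) :
    Integrable (fun t =>
        (1 - (charFun (μ.map X) t * conj (charFun (μ.map Y) t)).re) * energyWeight α t) ∧
      ∫ ω, |X ω - Y ω| ^ α ∂μ
        = ∫ t, (1 - (charFun (μ.map X) t * conj (charFun (μ.map Y) t)).re) * energyWeight α t := by
  have hsub : AEMeasurable (fun ω => X ω - Y ω) μ := hX.sub hY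
  have := Measure.isProbabilityMeasure_map (μ := μ) hsub
  have hpow : Measurable fun x : ℝ => |x| ^ α := by fun_prop
  have hmom : Integrable (fun x => |x| ^ α) (μ.map fun ω => X ω - Y ω) :=
    (integrable_map_measure hpow.aestronglyMeasurable hsub).2
      (integrable_abs_sub_rpow hα.1 hX.aestronglyMeasurable hY.aestronglyMeasurable hXm hYm)
  obtain ⟨hint, heq⟩ := integral_one_sub_re_charFun_mul_energyWeight _ hα hmom
  simp_rw [hXY.charFun_map_sub_eq_mul_conj hX hY] at hint heq
  exact ⟨hint, by rw [heq, integral_map hsub hpow.aestronglyMeasurable]⟩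

end RandomVariables

theorem generalized_energy_distance_eq_weighted_L2
    {Ω : Type*} [MeasurableSpace Ω] {μ : Measure Ω} [IsProbabilityMeasure μ]
    (α : ℝ) (hα : α ∈ Set.Ioo (0 : ℝ) 2)
    (X X' Y Y' : Ω → ℝ)
    (hX : Measurable X) (hX' : Measurable X') (hY : Measurable Y) (hY' : Measurable Y')
    (hindep : iIndepFun ![X, X', Y, Y'] μ)
    (hXX' : μ.map X = μ.map X') (hYY' : μ.map Y = μ.map Y')
    (hXmom : Integrable (fun ω => |X ω| ^ α) μ) (hYmom : Integrable (fun ω => |Y ω| ^ α) μ)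
    (φX φY : ℝ → ℂ)
    (hφX : ∀ t, φX t = ∫ ω, Complex.exp (Complex.I * (t * X ω)) ∂μ)
    (hφY : ∀ t, φY t = ∫ ω, Complex.exp (Complex.I * (t * Y ω)) ∂μ)
    (C : ℝ) (hC : C = 2 * Real.sqrt π * Real.Gamma (1 - α / 2)
      / (α * 2 ^ α * Real.Gamma ((1 + α) / 2))) :
    2 * (∫ ω, |X ω - Y ω| ^ α ∂μ) - (∫ ω, |X ω - X' ω| ^ α ∂μ)
        - (∫ ω, |Y ω - Y' ω| ^ α ∂μ)
      = ∫ t : ℝ, ‖φX t - φY t‖ ^ 2 * (C * |t| ^ (1 + α))⁻¹ := by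
  have hφX' : charFun (μ.map X) = φX :=
    funext fun t => (charFun_map_eq_integral hX.aemeasurable t).trans (hφX t).symm
  have hφY' : charFun (μ.map Y) = φY :=
    funext fun t => (charFun_map_eq_integral hY.aemeasurable t).trans (hφY t).symm
  have moment_of_map_eq : ∀ {U V : Ω → ℝ}, Measurable U → Measurable V → μ.map U = μ.map V →
      Integrable (fun ω => |U ω| ^ α) μ → Integrable (fun ω => |V ω| ^ α) μ :=
    fun hU hV hUV => ((IdentDistrib.mk hU.aemeasurable hV.aemeasurable hUV).comp
      (by fun_prop : Measurable fun x : ℝ => |x| ^ α)).integrable_iff.1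
  obtain ⟨iXY, eXY⟩ := (hindep.indepFun (show (0 : Fin 4) ≠ 2 by decide)).integral_abs_sub_rpow_eq
    hα hX.aemeasurable hY.aemeasurable hXmom hYmom
  obtain ⟨iXX, eXX⟩ := (hindep.indepFun (show (0 : Fin 4) ≠ 1 by decide)).integral_abs_sub_rpow_eq
    hα hX.aemeasurable hX'.aemeasurable hXmom (moment_of_map_eq hX hX' hXX' hXmom)
  obtain ⟨iYY, eYY⟩ := (hindep.indepFun (show (2 : Fin 4) ≠ 3 by decide)).integral_abs_sub_rpow_eq
    hα hY.aemeasurable hY'.aemeasurable hYmom (moment_of_map_eq hY hY' hYY' hYmom)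
  rw [← hXX', hφX'] at iXX eXX
  rw [← hYY', hφY'] at iYY eYY
  rw [hφX', hφY'] at iXY eXY
  rw [eXY, eXX, eYY, ← integral_const_mul, ← integral_sub (iXY.const_mul 2) iXX,
    ← integral_sub (by exact (iXY.const_mul 2).sub iXX) iYY]
  congr 1 with t
  subst hC
  change _ = _ * energyWeight α t
  rw [Complex.mul_conj, Complex.mul_conj, Complex.ofReal_re, Complex.ofReal_re, Complex.sq_norm,
    Complex.normSq_sub]
  ring
end
end

section
/- For any real numbers a and b, ∫_{−∞}^{∞} (1 − cos(t(a−b)))/(π t²) dt = |a − b|; consequently, for independent integrable random variables X, Y with characteristic functions φ_X, φ_Y, E|X−Y| = ∫ (1 − Re(φ_X(t) φ_Y(−t)))/(π t²) dt. -/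
/-!
Writing `1 / u ^ 2 = ∫₀^∞ s e^{-s u} ds` and exchanging the order of integration (Tonelli), the
Laplace transform `∫₀^∞ e^{-s u} (1 - cos u) du = 1 / s - s / (1 + s ^ 2)` turns
`∫₀^∞ (1 - cos u) / u ^ 2 du` into `∫₀^∞ ds / (1 + s ^ 2) = π / 2`; evenness and rescaling give
the first identity. For the second, independence turns `φX t * φY (-t)` into `E e^{i t (X - Y)}`,
whose real part is `E cos (t (X - Y))`; integrating the first identity with `a - b = X - Y`
against `μ` and exchanging the integrals once more (everything is nonnegative) gives `E |X - Y|`.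
-/

open MeasureTheory ProbabilityTheory Real Set
open scoped ENNReal

theorem lintegral_ofReal_eq_ofReal_of_integral_eq {α : Type*} [MeasurableSpace α]
    {μ : Measure α} {f : α → ℝ} {c : ℝ} (hf : 0 ≤ᵐ[μ] f) (hc : c ≠ 0)
    (h : ∫ x, f x ∂μ = c) :
    ∫⁻ x, ENNReal.ofReal (f x) ∂μ = ENNReal.ofReal c := by
  rw [← h, ofReal_integral_eq_lintegral_ofReal (.of_integral_ne_zero (h ▸ hc)) hf]

theorem integral_Ioi_mul_exp_neg_mul {u : ℝ} (hu : 0 < u) :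
    ∫ s in Ioi (0 : ℝ), s * exp (-(u * s)) = 1 / u ^ 2 := by
  have := integral_rpow_mul_exp_neg_mul_Ioi two_pos hu
  norm_num [Real.Gamma_two] at this
  simpa using this

theorem integral_Ioi_exp_neg_mul_mul_one_sub_cos {s : ℝ} (hs : 0 < s) :
    ∫ u in Ioi (0 : ℝ), exp (-(s * u)) * (1 - cos u) = 1 / s - s / (1 + s ^ 2) := by
  have hre : ∀ u : ℝ, exp (-(s * u)) * (1 - cos u)
      = (Complex.exp (-s * u) - Complex.exp ((-s + Complex.I) * u)).re := by
    intro u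
    simp [Complex.exp_re, mul_sub]
  have h1 := integrableOn_exp_mul_complex_Ioi (a := -s) (by simpa using hs) 0
  have h2 := integrableOn_exp_mul_complex_Ioi (a := -s + Complex.I) (by simpa using hs) 0
  simp_rw [hre]
  refine (integral_re (h1.sub h2)).trans ?_
  rw [Pi.sub_def, integral_sub h1 h2, integral_exp_mul_complex_Ioi (by simpa using hs),
    integral_exp_mul_complex_Ioi (by simpa using hs)]
  simp [Complex.div_re, Complex.normSq, sq, add_comm, sub_eq_add_neg]

theorem lintegral_Ioi_mul_exp_neg_mul_mul_one_sub_cos_eq_div_sq {u : ℝ} (hu : 0 < u) :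
    ∫⁻ s in Ioi (0 : ℝ), ENNReal.ofReal (s * exp (-(u * s)) * (1 - cos u))
      = ENNReal.ofReal ((1 - cos u) / u ^ 2) := by
  have hcos : 0 ≤ 1 - cos u := sub_nonneg.2 (cos_le_one u)
  simp_rw [ENNReal.ofReal_mul' hcos]
  rw [lintegral_mul_const' _ _ ENNReal.ofReal_ne_top,
    lintegral_ofReal_eq_ofReal_of_integral_eq
      (ae_restrict_of_forall_mem measurableSet_Ioi fun s hs => by positivity [hs.out])
      (by positivity) (integral_Ioi_mul_exp_neg_mul hu),
    ← ENNReal.ofReal_mul (by positivity)]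
  ring_nf

theorem lintegral_Ioi_mul_exp_neg_mul_mul_one_sub_cos_eq_inv_one_add_sq {s : ℝ} (hs : 0 < s) :
    ∫⁻ u in Ioi (0 : ℝ), ENNReal.ofReal (s * exp (-(u * s)) * (1 - cos u))
      = ENNReal.ofReal (1 + s ^ 2)⁻¹ := by
  refine lintegral_ofReal_eq_ofReal_of_integral_eq
    (ae_of_all _ fun u => mul_nonneg (by positivity) (sub_nonneg.2 (cos_le_one u)))
    (by positivity) ?_
  simp_rw [mul_comm _ s, mul_assoc]
  rw [integral_const_mul, integral_Ioi_exp_neg_mul_mul_one_sub_cos hs]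
  field_simp
  ring

theorem lintegral_Ioi_one_sub_cos_div_sq :
    ∫⁻ u in Ioi (0 : ℝ), ENNReal.ofReal ((1 - cos u) / u ^ 2) = ENNReal.ofReal (π / 2) := by
  calc ∫⁻ u in Ioi (0 : ℝ), ENNReal.ofReal ((1 - cos u) / u ^ 2)
      = ∫⁻ u in Ioi (0 : ℝ), ∫⁻ s in Ioi (0 : ℝ),
          ENNReal.ofReal (s * exp (-(u * s)) * (1 - cos u)) :=
        setLIntegral_congr_fun measurableSet_Ioi fun u hu =>
          (lintegral_Ioi_mul_exp_neg_mul_mul_one_sub_cos_eq_div_sq hu).symm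
    _ = ∫⁻ s in Ioi (0 : ℝ), ∫⁻ u in Ioi (0 : ℝ),
          ENNReal.ofReal (s * exp (-(u * s)) * (1 - cos u)) :=
        lintegral_lintegral_swap (by fun_prop)
    _ = ∫⁻ s in Ioi (0 : ℝ), ENNReal.ofReal (1 + s ^ 2)⁻¹ :=
        setLIntegral_congr_fun measurableSet_Ioi fun s hs =>
          lintegral_Ioi_mul_exp_neg_mul_mul_one_sub_cos_eq_inv_one_add_sq hs
    _ = ENNReal.ofReal (π / 2) :=
        lintegral_ofReal_eq_ofReal_of_integral_eq (ae_of_all _ fun s => by positivity)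
          (by positivity) (by simp)

theorem integral_one_sub_cos_div_sq : ∫ u, (1 - cos u) / u ^ 2 = π := by
  have hIoi : ∫ u in Ioi (0 : ℝ), (1 - cos u) / u ^ 2 = π / 2 := by
    rw [integral_eq_lintegral_of_nonneg_ae
        (ae_of_all _ fun u => div_nonneg (sub_nonneg.2 (cos_le_one u)) (sq_nonneg u))
        (Measurable.aestronglyMeasurable (by fun_prop)), lintegral_Ioi_one_sub_cos_div_sq,
      ENNReal.toReal_ofReal (by positivity)]
  calc ∫ u, (1 - cos u) / u ^ 2 = ∫ u, (1 - cos |u|) / |u| ^ 2 := by simp [cos_abs]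
    _ = π := by rw [integral_comp_abs (f := fun u => (1 - cos u) / u ^ 2), hIoi]; ring

theorem integral_one_sub_cos_mul_div_pi_mul_sq (c : ℝ) :
    ∫ t, (1 - cos (t * c)) / (π * t ^ 2) = |c| := by
  rcases eq_or_ne c 0 with rfl | hc
  · simp
  have hscale : ∀ t, (1 - cos (t * c)) / (π * t ^ 2)
      = c ^ 2 / π * ((1 - cos (c * t)) / (c * t) ^ 2) := by
    intro t
    rcases eq_or_ne t 0 with rfl | ht
    · simp
    · field_simp
  simp_rw [hscale]
  rw [integral_const_mul, Measure.integral_comp_mul_left (fun u => (1 - cos u) / u ^ 2),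
    integral_one_sub_cos_div_sq, smul_eq_mul, abs_inv, ← sq_abs]
  field_simp

theorem lintegral_one_sub_cos_mul_div_pi_mul_sq (c : ℝ) :
    ∫⁻ t, ENNReal.ofReal ((1 - cos (t * c)) / (π * t ^ 2)) = ENNReal.ofReal |c| := by
  rcases eq_or_ne c 0 with rfl | hc
  · simp
  exact lintegral_ofReal_eq_ofReal_of_integral_eq
    (ae_of_all _ fun t => div_nonneg (sub_nonneg.2 (cos_le_one _)) (by positivity))
    (abs_ne_zero.2 hc) (integral_one_sub_cos_mul_div_pi_mul_sq c)

section Probability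

variable {Ω : Type*} [MeasurableSpace Ω] {μ : Measure Ω}

theorem ProbabilityTheory.IndepFun.integral_cexp_mul_integral_cexp_neg {X Y : Ω → ℝ}
    (hX : AEMeasurable X μ) (hY : AEMeasurable Y μ) (hXY : IndepFun X Y μ) (t : ℝ) :
    (∫ ω, Complex.exp (Complex.I * (t * X ω)) ∂μ)
        * ∫ ω, Complex.exp (Complex.I * ((-t : ℝ) * Y ω)) ∂μ
      = ∫ ω, Complex.exp (Complex.I * (t * (X ω - Y ω : ℝ))) ∂μ := by
  rw [← hXY.integral_fun_comp_mul_comp (f := fun x : ℝ => Complex.exp (Complex.I * (t * x)))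
    (g := fun y : ℝ => Complex.exp (Complex.I * ((-t : ℝ) * y))) hX hY (by fun_prop) (by fun_prop)]
  congr with ω
  rw [← Complex.exp_add]
  push_cast
  ring_nf

theorem re_integral_cexp_I_mul [IsFiniteMeasure μ] {Z : Ω → ℝ} (hZ : AEMeasurable Z μ) (t : ℝ) :
    (∫ ω, Complex.exp (Complex.I * (t * Z ω)) ∂μ).re = ∫ ω, cos (t * Z ω) ∂μ := by
  have hint : Integrable (fun ω => Complex.exp (Complex.I * (t * Z ω))) μ :=
    .of_bound (by fun_prop) 1 (ae_of_all _ fun ω => by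
      rw [mul_comm, ← Complex.ofReal_mul, Complex.norm_exp_ofReal_mul_I])
  refine (integral_re hint).symm.trans (integral_congr_ae (ae_of_all _ fun ω => ?_))
  show (Complex.exp (Complex.I * (t * Z ω))).re = cos (t * Z ω)
  rw [mul_comm, ← Complex.ofReal_mul, Complex.exp_ofReal_mul_I_re]

/-- Both sides are the `toReal` of one and the same lintegral, so this also holds, as `0 = 0`,
when `|Z|` is not integrable. -/
theorem integral_abs_eq_integral_integral_one_sub_cos [IsFiniteMeasure μ] {Z : Ω → ℝ}
    (hZ : Measurable Z) :
    ∫ ω, |Z ω| ∂μ = ∫ t, ∫ ω, (1 - cos (t * Z ω)) / (π * t ^ 2) ∂μ := by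
  have hnonneg : ∀ t x, 0 ≤ (1 - cos (t * x)) / (π * t ^ 2) := fun t x =>
    div_nonneg (sub_nonneg.2 (cos_le_one _)) (by positivity)
  have hmeas : Measurable (Function.uncurry fun t ω => (1 - cos (t * Z ω)) / (π * t ^ 2)) := by
    fun_prop
  have hint : ∀ t, Integrable (fun ω => (1 - cos (t * Z ω)) / (π * t ^ 2)) μ := fun t =>
    .of_bound (by fun_prop) (2 / (π * t ^ 2)) (ae_of_all _ fun ω => by
      rw [Real.norm_of_nonneg (hnonneg t _)]
      gcongr
      linarith [neg_one_le_cos (t * Z ω)])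
  rw [integral_eq_lintegral_of_nonneg_ae (ae_of_all _ fun ω => abs_nonneg _) (by fun_prop),
    integral_eq_lintegral_of_nonneg_ae (ae_of_all _ fun t => integral_nonneg (hnonneg t <| Z ·))
      hmeas.stronglyMeasurable.integral_prod_right'.aestronglyMeasurable]
  congr 1
  calc ∫⁻ ω, ENNReal.ofReal |Z ω| ∂μ
      = ∫⁻ ω, (∫⁻ t, ENNReal.ofReal ((1 - cos (t * Z ω)) / (π * t ^ 2))) ∂μ := by
        simp_rw [lintegral_one_sub_cos_mul_div_pi_mul_sq]
    _ = ∫⁻ t, ∫⁻ ω, ENNReal.ofReal ((1 - cos (t * Z ω)) / (π * t ^ 2)) ∂μ :=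
        lintegral_lintegral_swap (by fun_prop)
    _ = ∫⁻ t, ENNReal.ofReal (∫ ω, (1 - cos (t * Z ω)) / (π * t ^ 2) ∂μ) := by
        congr with t
        rw [ofReal_integral_eq_lintegral_ofReal (hint t) (ae_of_all _ fun ω => hnonneg t _)]

end Probability

theorem integral_one_sub_cos_and_expectation_abs_general
    (a b : ℝ)
    {Ω : Type*} [MeasurableSpace Ω] {μ : Measure Ω} [IsProbabilityMeasure μ]
    (X Y : Ω → ℝ) (hX : Measurable X) (hY : Measurable Y)
    (hindep : IndepFun X Y μ)
    (φX φY : ℝ → ℂ)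
    (hφX : ∀ t, φX t = ∫ ω, Complex.exp (Complex.I * (t * X ω)) ∂μ)
    (hφY : ∀ t, φY t = ∫ ω, Complex.exp (Complex.I * (t * Y ω)) ∂μ) :
    (∫ t : ℝ, (1 - Real.cos (t * (a - b))) / (π * t ^ 2)) = |a - b| ∧
    (∫ ω, |X ω - Y ω| ∂μ)
      = ∫ t : ℝ, (1 - (φX t * φY (-t)).re) / (π * t ^ 2) := by
  refine ⟨integral_one_sub_cos_mul_div_pi_mul_sq (a - b), ?_⟩
  rw [integral_abs_eq_integral_integral_one_sub_cos (Z := fun ω => X ω - Y ω) (hX.sub hY)]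
  congr with t
  have hcos : Integrable (fun ω => cos (t * (X ω - Y ω))) μ :=
    .of_bound (by fun_prop) 1 (ae_of_all _ fun ω => (norm_eq_abs _).trans_le (abs_cos_le_one _))
  rw [hφX, hφY, hindep.integral_cexp_mul_integral_cexp_neg hX.aemeasurable hY.aemeasurable,
    re_integral_cexp_I_mul (by fun_prop), integral_div, integral_sub (integrable_const 1) hcos,
    integral_const, probReal_univ, one_smul]

theorem integral_one_sub_cos_and_expectation_abs
    (a b : ℝ)
    {Ω : Type*} [MeasurableSpace Ω] {μ : Measure Ω} [IsProbabilityMeasure μ]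
    (X Y : Ω → ℝ) (hX : Measurable X) (hY : Measurable Y)
    (hindep : IndepFun X Y μ)
    (hXint : Integrable X μ) (hYint : Integrable Y μ)
    (φX φY : ℝ → ℂ)
    (hφX : ∀ t, φX t = ∫ ω, Complex.exp (Complex.I * (t * X ω)) ∂μ)
    (hφY : ∀ t, φY t = ∫ ω, Complex.exp (Complex.I * (t * Y ω)) ∂μ) :
    (∫ t : ℝ, (1 - Real.cos (t * (a - b))) / (π * t ^ 2)) = |a - b| ∧
    (∫ ω, |X ω - Y ω| ∂μ)
      = ∫ t : ℝ, (1 - (φX t * φY (-t)).re) / (π * t ^ 2) :=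
  integral_one_sub_cos_and_expectation_abs_general a b X Y hX hY hindep φX φY hφX hφY
end
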